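/- arXiv:2204.08214 — 2 statements merged into one kernel-verified Lean document; each statement's English description precedes it below -/
import Mathlib

section
/- Let N_p ∈ ℕ, let ω_s > 0 for s = 1,…,N_p, let B₀ ∈ ℝ³ be a constant vector with b := |B₀| > 0 and hat matrix B̂₀, and let t ∈ ℝ. Define R(t) = I + (sin(bt)/b)·B̂₀ + ((1 − cos(bt))/b²)·B̂₀² and A(t) = t·I + ((1 − cos(bt))/b²)·B̂₀ + ((bt − sin(bt))/b³)·B̂₀², and the drift–rotation map ψ_t(X,V) = (X', V') with X'_s = X_s + A(t) V_s and V'_s = R(t) V_s for each s. Then ψ_t preserves the discrete particle bracket with constant field B₀: for all continuously differentiable F, G : (ℝ³)^{N_p} × (ℝ³)^{N_p} → ℝ and all (X,V), {F∘ψ_t, G∘ψ_t}(X,V) = {F,G}(ψ_t(X,V)). -/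
open Matrix
open scoped Matrix BigOperators

noncomputable section

/-- Phase space of `Np` particles in 3D: positions and velocities. -/
abbrev Phase (Np : ℕ) := (Fin Np → Fin 3 → ℝ) × (Fin Np → Fin 3 → ℝ)

/-- Gradient of `F` with respect to the position `X s` of the `s`-th particle. -/
def gradX {Np : ℕ} (F : Phase Np → ℝ) (Z : Phase Np) (s : Fin Np) : Fin 3 → ℝ :=
  fun i => fderiv ℝ F Z (Pi.single s (Pi.single i 1), 0)

/-- Gradient of `F` with respect to the velocity `V s` of the `s`-th particle. -/
def gradV {Np : ℕ} (F : Phase Np → ℝ) (Z : Phase Np) (s : Fin Np) : Fin 3 → ℝ :=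
  fun i => fderiv ℝ F Z (0, Pi.single s (Pi.single i 1))

/-- The discrete particle bracket with weights `ω` and constant magnetic field `B0`. -/
def pBracket {Np : ℕ} (ω : Fin Np → ℝ) (B0 : Fin 3 → ℝ)
    (F G : Phase Np → ℝ) (Z : Phase Np) : ℝ :=
  (∑ s, (1 / ω s) * (gradX F Z s ⬝ᵥ gradV G Z s - gradX G Z s ⬝ᵥ gradV F Z s)) +
    ∑ s, (1 / ω s) * (B0 ⬝ᵥ (gradV F Z s ⨯₃ gradV G Z s))

/-- The hat matrix of a vector `B ∈ ℝ³`, satisfying `B̂ v = v × B`. -/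
def hatMatrix (B : Fin 3 → ℝ) : Matrix (Fin 3) (Fin 3) ℝ :=
  !![0, B 2, -(B 1); -(B 2), 0, B 0; B 1, -(B 0), 0]

/-- The Euclidean norm of a vector in ℝ³. -/
def enorm3 (B : Fin 3 → ℝ) : ℝ := Real.sqrt (∑ i, B i ^ 2)

/-!
Per particle, the bracket is `∇F ⬝ J ∇G` for the constant Poisson tensor `J = [[0, 1], [-1, B̂₀]]`
(the magnetic term is `B₀ ⬝ (u × w) = u ⬝ B̂₀ w`), and `ψ_t` is linear with block matrix
`M = [[1, A], [0, R]]`, so `∇(F ∘ ψ_t) = Mᵀ ∇F ∘ ψ_t` and the claim reduces to `M J Mᵀ = J`.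
Since `B̂₀ᵀ = -B̂₀` and `B̂₀³ = -b² B̂₀`, every product of `1, B̂₀, B̂₀²` stays in their span,
and the blocks of `M J Mᵀ = J` become polynomial identities in the coefficients of `R` and `A`;
they follow from `sin² + cos² = 1`.
-/

section MatrixIdentities

variable {n K : Type*} [Fintype n] [DecidableEq n] [CommRing K]

theorem rodrigues_identities {H R A : Matrix n n K} {b σ κ δ t : K}
    (hHt : Hᵀ = -H) (hH3 : H * (H * H) = -b ^ 2 • H)
    (hσκ : σ ^ 2 + b ^ 2 * κ ^ 2 = 2 * κ) (hδ : b ^ 2 * δ + σ = t)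
    (hR : R = 1 + σ • H + κ • (H * H)) (hA : A = t • 1 + κ • H + δ • (H * H)) :
    A * (H * Aᵀ) = A - Aᵀ ∧ A * (H * Rᵀ) = 1 - Rᵀ ∧ R * (H * Aᵀ) = R - 1 ∧
      R * (H * Rᵀ) = H := by
  have hHHt : (H * H)ᵀ = H * H := by rw [transpose_mul, hHt, neg_mul_neg]
  subst hR hA hδ
  simp only [transpose_add, transpose_smul, transpose_one, hHt, hHHt]
  refine ⟨?_, ?_, ?_, ?_⟩ <;>
    simp only [add_mul, mul_add, smul_mul_assoc, mul_smul_comm, one_mul, mul_one, smul_smul,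
      mul_assoc, smul_neg, neg_mul, mul_neg, hH3, smul_add]
  · match_scalars
    · linear_combination hσκ
    all_goals ring
  · match_scalars
    · ring
    · linear_combination -hσκ
    · ring
  · match_scalars
    · ring
    · linear_combination hσκ
    · ring
  · match_scalars
    · linear_combination b ^ 2 * hσκ
    · ring

def poissonForm (H : Matrix n n K) (x v x' v' : n → K) : K :=
  x ⬝ᵥ v' - x' ⬝ᵥ v + v ⬝ᵥ H *ᵥ v'

theorem poissonForm_transform {H A R : Matrix n n K}
    (hAA : A * (H * Aᵀ) = A - Aᵀ) (hAR : A * (H * Rᵀ) = 1 - Rᵀ) (hRA : R * (H * Aᵀ) = R - 1)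
    (hRR : R * (H * Rᵀ) = H) (x v x' v' : n → K) :
    poissonForm H x (Aᵀ *ᵥ x + Rᵀ *ᵥ v) x' (Aᵀ *ᵥ x' + Rᵀ *ᵥ v') = poissonForm H x v x' v' := by
  have hT (M : Matrix n n K) (u w : n → K) : (Mᵀ *ᵥ u) ⬝ᵥ w = u ⬝ᵥ M *ᵥ w := by
    rw [mulVec_transpose, dotProduct_mulVec]
  simp only [poissonForm, mulVec_add, dotProduct_add, add_dotProduct, hT, mulVec_mulVec,
    hAA, hAR, hRA, hRR]
  rw [dotProduct_comm x' (Aᵀ *ᵥ x), dotProduct_comm x' (Rᵀ *ᵥ v), hT, hT, dotProduct_comm x' v]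
  simp only [sub_mulVec, one_mulVec, dotProduct_sub]
  ring

end MatrixIdentities

section HatMatrix

theorem sq_enorm3 (B : Fin 3 → ℝ) : enorm3 B ^ 2 = B ⬝ᵥ B := by
  rw [enorm3, Real.sq_sqrt (by positivity), dotProduct]
  simp only [sq]

theorem hatMatrix_transpose (B : Fin 3 → ℝ) : (hatMatrix B)ᵀ = -hatMatrix B := by
  ext i j
  fin_cases i <;> fin_cases j <;> simp [hatMatrix]

theorem hatMatrix_mul_hatMatrix_mul_hatMatrix (B : Fin 3 → ℝ) :
    hatMatrix B * (hatMatrix B * hatMatrix B) = -(B ⬝ᵥ B) • hatMatrix B := by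
  ext i j
  fin_cases i <;> fin_cases j <;>
    simp [hatMatrix, mul_apply, dotProduct, Fin.sum_univ_three] <;> ring

theorem dotProduct_cross_eq_dotProduct_hatMatrix_mulVec (B v w : Fin 3 → ℝ) :
    B ⬝ᵥ (v ⨯₃ w) = v ⬝ᵥ hatMatrix B *ᵥ w := by
  simp [cross_apply, hatMatrix, dotProduct, mulVec, Fin.sum_univ_three]
  ring

theorem hatMatrix_rodrigues_identities {B : Fin 3 → ℝ} (hB : enorm3 B ≠ 0) {t : ℝ}
    {R A : Matrix (Fin 3) (Fin 3) ℝ}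
    (hR : R = 1 + (Real.sin (enorm3 B * t) / enorm3 B) • hatMatrix B +
      ((1 - Real.cos (enorm3 B * t)) / (enorm3 B) ^ 2) • (hatMatrix B * hatMatrix B))
    (hA : A = t • (1 : Matrix (Fin 3) (Fin 3) ℝ) +
      ((1 - Real.cos (enorm3 B * t)) / (enorm3 B) ^ 2) • hatMatrix B +
      ((enorm3 B * t - Real.sin (enorm3 B * t)) / (enorm3 B) ^ 3) •
        (hatMatrix B * hatMatrix B)) :
    A * (hatMatrix B * Aᵀ) = A - Aᵀ ∧ A * (hatMatrix B * Rᵀ) = 1 - Rᵀ ∧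
      R * (hatMatrix B * Aᵀ) = R - 1 ∧ R * (hatMatrix B * Rᵀ) = hatMatrix B := by
  refine rodrigues_identities (b := enorm3 B) (hatMatrix_transpose B) ?_ ?_ ?_ hR hA
  · rw [sq_enorm3, hatMatrix_mul_hatMatrix_mul_hatMatrix]
  · field_simp
    linear_combination Real.sin_sq_add_cos_sq (enorm3 B * t)
  · field_simp
    ring

end HatMatrix

section Gradients

theorem fderiv_comp_continuousLinearMap_apply {𝕜 E F G : Type*} [NontriviallyNormedField 𝕜]
    [NormedAddCommGroup E] [NormedSpace 𝕜 E] [NormedAddCommGroup F] [NormedSpace 𝕜 F]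
    [NormedAddCommGroup G] [NormedSpace 𝕜 G] {f : F → G} (L : E →L[𝕜] F) {x : E}
    (hf : DifferentiableAt 𝕜 f (L x)) (v : E) :
    fderiv 𝕜 (f ∘ L) x v = fderiv 𝕜 f (L x) (L v) := by
  rw [fderiv_comp x hf L.differentiableAt, L.fderiv, ContinuousLinearMap.comp_apply]

variable {Np : ℕ}

theorem fderiv_apply_single_single (F : Phase Np → ℝ) (Z : Phase Np) (s : Fin Np)
    (u w : Fin 3 → ℝ) :
    fderiv ℝ F Z (Pi.single s u, Pi.single s w) = gradX F Z s ⬝ᵥ u + gradV F Z s ⬝ᵥ w := by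
  have hdecomp : ((Pi.single s u, Pi.single s w) : Phase Np) =
      ∑ i, u i • (Pi.single s (Pi.single i 1), 0) +
        ∑ i, w i • (0, Pi.single s (Pi.single i 1)) := by
    ext s' i <;> by_cases h : s' = s <;>
      simp [Prod.fst_sum, Prod.snd_sum, Finset.sum_apply, Pi.single_apply, h]
  simp only [hdecomp, map_add, map_sum, map_smul, gradX, gradV, dotProduct, smul_eq_mul,
    mul_comm]

def driftRotation (A R : Matrix (Fin 3) (Fin 3) ℝ) : Phase Np →L[ℝ] Phase Np :=
  LinearMap.toContinuousLinearMap
    { toFun := fun Z => (fun s => Z.1 s + A *ᵥ Z.2 s, fun s => R *ᵥ Z.2 s)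
      map_add' := fun Z W => by
        ext1 <;> funext s <;> simp only [Prod.fst_add, Prod.snd_add, Pi.add_apply, mulVec_add]
        abel
      map_smul' := fun c Z => by
        ext1 <;> funext s <;> simp [mulVec_smul] }

variable {A R : Matrix (Fin 3) (Fin 3) ℝ} {F : Phase Np → ℝ} {Z : Phase Np}

theorem gradX_comp_driftRotation (hF : DifferentiableAt ℝ F (driftRotation A R Z))
    (s : Fin Np) :
    gradX (F ∘ driftRotation A R) Z s = gradX F (driftRotation A R Z) s := by
  funext i
  rw [gradX, gradX, fderiv_comp_continuousLinearMap_apply _ hF]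
  congr 1
  ext s' : 2 <;> simp [driftRotation]

theorem gradV_comp_driftRotation (hF : DifferentiableAt ℝ F (driftRotation A R Z))
    (s : Fin Np) :
    gradV (F ∘ driftRotation A R) Z s =
      Aᵀ *ᵥ gradX F (driftRotation A R Z) s + Rᵀ *ᵥ gradV F (driftRotation A R Z) s := by
  funext i
  have hL : driftRotation A R (0, Pi.single s (Pi.single i 1)) =
      ((Pi.single s (A *ᵥ Pi.single i 1), Pi.single s (R *ᵥ Pi.single i 1)) : Phase Np) := by
    ext s' : 2 <;> by_cases h : s' = s <;> simp [driftRotation, h]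
  rw [gradV, fderiv_comp_continuousLinearMap_apply _ hF, hL, fderiv_apply_single_single,
    dotProduct_mulVec, dotProduct_mulVec, dotProduct_single, dotProduct_single, ← mulVec_transpose,
    ← mulVec_transpose, mul_one, mul_one, Pi.add_apply]

end Gradients

theorem pBracket_eq_sum_poissonForm {Np : ℕ} (ω : Fin Np → ℝ) (B0 : Fin 3 → ℝ)
    (F G : Phase Np → ℝ) (Z : Phase Np) :
    pBracket ω B0 F G Z = ∑ s, (1 / ω s) *
      poissonForm (hatMatrix B0) (gradX F Z s) (gradV F Z s) (gradX G Z s) (gradV G Z s) := by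
  simp only [pBracket, poissonForm, dotProduct_cross_eq_dotProduct_hatMatrix_mulVec,
    ← Finset.sum_add_distrib, ← mul_add]

theorem drift_rotation_preserves_bracket_general {Np : ℕ}
    (ω : Fin Np → ℝ)
    (B0 : Fin 3 → ℝ) (hb : 0 < enorm3 B0) (t : ℝ)
    (R A : Matrix (Fin 3) (Fin 3) ℝ)
    (hR : R = 1 + (Real.sin (enorm3 B0 * t) / enorm3 B0) • hatMatrix B0 +
      ((1 - Real.cos (enorm3 B0 * t)) / (enorm3 B0) ^ 2) • (hatMatrix B0 * hatMatrix B0))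
    (hA : A = t • (1 : Matrix (Fin 3) (Fin 3) ℝ) +
      ((1 - Real.cos (enorm3 B0 * t)) / (enorm3 B0) ^ 2) • hatMatrix B0 +
      ((enorm3 B0 * t - Real.sin (enorm3 B0 * t)) / (enorm3 B0) ^ 3) •
        (hatMatrix B0 * hatMatrix B0))
    (ψ : Phase Np → Phase Np)
    (hψ : ψ = fun Z => (fun s => Z.1 s + A.mulVec (Z.2 s), fun s => R.mulVec (Z.2 s)))
    (F G : Phase Np → ℝ) (hF : ContDiff ℝ 1 F) (hG : ContDiff ℝ 1 G) (Z : Phase Np) :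
    pBracket ω B0 (F ∘ ψ) (G ∘ ψ) Z = pBracket ω B0 F G (ψ Z) := by
  obtain ⟨hAA, hAR, hRA, hRR⟩ := hatMatrix_rodrigues_identities hb.ne' hR hA
  obtain rfl : ψ = driftRotation A R := hψ
  have hF' := hF.differentiable one_ne_zero (driftRotation A R Z)
  have hG' := hG.differentiable one_ne_zero (driftRotation A R Z)
  simp only [pBracket_eq_sum_poissonForm, gradX_comp_driftRotation hF',
    gradX_comp_driftRotation hG', gradV_comp_driftRotation hF', gradV_comp_driftRotation hG',
    poissonForm_transform hAA hAR hRA hRR]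

/-- The drift–rotation map (exact flow of the kinetic subsystem) preserves the discrete
particle bracket with constant magnetic field `B0`. -/
theorem drift_rotation_preserves_bracket {Np : ℕ}
    (ω : Fin Np → ℝ) (hω : ∀ s, 0 < ω s)
    (B0 : Fin 3 → ℝ) (hb : 0 < enorm3 B0) (t : ℝ)
    (R A : Matrix (Fin 3) (Fin 3) ℝ)
    (hR : R = 1 + (Real.sin (enorm3 B0 * t) / enorm3 B0) • hatMatrix B0 +
      ((1 - Real.cos (enorm3 B0 * t)) / (enorm3 B0) ^ 2) • (hatMatrix B0 * hatMatrix B0))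
    (hA : A = t • (1 : Matrix (Fin 3) (Fin 3) ℝ) +
      ((1 - Real.cos (enorm3 B0 * t)) / (enorm3 B0) ^ 2) • hatMatrix B0 +
      ((enorm3 B0 * t - Real.sin (enorm3 B0 * t)) / (enorm3 B0) ^ 3) •
        (hatMatrix B0 * hatMatrix B0))
    (ψ : Phase Np → Phase Np)
    (hψ : ψ = fun Z => (fun s => Z.1 s + A.mulVec (Z.2 s), fun s => R.mulVec (Z.2 s)))
    (F G : Phase Np → ℝ) (hF : ContDiff ℝ 1 F) (hG : ContDiff ℝ 1 G) (Z : Phase Np) :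
    pBracket ω B0 (F ∘ ψ) (G ∘ ψ) Z = pBracket ω B0 F G (ψ Z) :=
  drift_rotation_preserves_bracket_general ω B0 hb t R A hR hA ψ hψ F G hF hG Z

end
end

section
/- Let B ∈ ℝ³ be a fixed vector and let a, b, c : ℝ³ → ℝ be twice continuously differentiable. Then at every point v ∈ ℝ³, the cyclic sum B · ( ∇(B · (∇a × ∇b))(v) × ∇c(v) ) + B · ( ∇(B · (∇b × ∇c))(v) × ∇a(v) ) + B · ( ∇(B · (∇c × ∇a))(v) × ∇b(v) ) = 0, where ∇ denotes the gradient in v. -/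
/-!
Write `u_f := ∇f × B`. The triple product identity `B · (X × Y) = X · (Y × B)` turns
`B · (∇(B · (∇a × ∇b)) × ∇c)` into the derivative of `B · (∇a × ∇b)` along `u_c`, which by the
product rule is `D²a(u_c, u_b) - D²b(u_c, u_a)`. In the cyclic sum the six Hessian terms cancel
in pairs by the symmetry of second derivatives.
-/

open Matrix
open scoped Matrix BigOperators

noncomputable section

/-- Gradient of a function on ℝ³ (vector of partial derivatives). -/
def grad3 (f : (Fin 3 → ℝ) → ℝ) (v : Fin 3 → ℝ) : Fin 3 → ℝ :=
  fun i => fderiv ℝ f v (Pi.single i 1)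

def dualCoordsL (n : ℕ) : ((Fin n → ℝ) →L[ℝ] ℝ) →L[ℝ] (Fin n → ℝ) :=
  ContinuousLinearMap.pi fun i => ContinuousLinearMap.apply ℝ ℝ (Pi.single i 1)

theorem dualCoordsL_dotProduct {n : ℕ} (L : (Fin n → ℝ) →L[ℝ] ℝ) (u : Fin n → ℝ) :
    dualCoordsL n L ⬝ᵥ u = L u := by
  conv_rhs => rw [pi_eq_sum_univ' u, map_sum]
  simp [dualCoordsL, dotProduct, mul_comm]

theorem grad3_dotProduct (f : (Fin 3 → ℝ) → ℝ) (v u : Fin 3 → ℝ) :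
    grad3 f v ⬝ᵥ u = fderiv ℝ f v u :=
  dualCoordsL_dotProduct _ u

theorem hasFDerivAt_grad3 {f : (Fin 3 → ℝ) → ℝ} {v : Fin 3 → ℝ}
    (hf : DifferentiableAt ℝ (fderiv ℝ f) v) :
    HasFDerivAt (grad3 f) ((dualCoordsL 3).comp (fderiv ℝ (fderiv ℝ f) v)) v :=
  (dualCoordsL 3).hasFDerivAt.comp v hf.hasFDerivAt

def tripleProductL (B : Fin 3 → ℝ) : (Fin 3 → ℝ) →L[ℝ] (Fin 3 → ℝ) →L[ℝ] ℝ :=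
  (crossProduct.compr₂ (dotProductBilin ℝ ℝ B)).toContinuousBilinearMap

@[simp]
theorem tripleProductL_apply (B X Y : Fin 3 → ℝ) : tripleProductL B X Y = B ⬝ᵥ (X ⨯₃ Y) := rfl

theorem fderiv_tripleProduct_grad3 (B : Fin 3 → ℝ) {a b : (Fin 3 → ℝ) → ℝ} {v : Fin 3 → ℝ}
    (ha : DifferentiableAt ℝ (fderiv ℝ a) v) (hb : DifferentiableAt ℝ (fderiv ℝ b) v)
    (u : Fin 3 → ℝ) :
    fderiv ℝ (fun w => B ⬝ᵥ (grad3 a w ⨯₃ grad3 b w)) v u =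
      fderiv ℝ (fderiv ℝ a) v u (grad3 b v ⨯₃ B) -
        fderiv ℝ (fderiv ℝ b) v u (grad3 a v ⨯₃ B) := by
  change fderiv ℝ (fun w => tripleProductL B (grad3 a w) (grad3 b w)) v u = _
  rw [((tripleProductL B).hasFDerivAt_of_bilinear (hasFDerivAt_grad3 ha)
    (hasFDerivAt_grad3 hb)).fderiv]
  simp only [_root_.add_apply, ContinuousLinearMap.precompR_apply,
    ContinuousLinearMap.precompL_apply, ContinuousLinearMap.compL_apply,
    ContinuousLinearMap.comp_apply, tripleProductL_apply]
  set Da := dualCoordsL 3 (fderiv ℝ (fderiv ℝ a) v u)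
  set Db := dualCoordsL 3 (fderiv ℝ (fderiv ℝ b) v u)
  rw [triple_product_permutation B Da, ← triple_product_permutation Db B,
    ← cross_anticomm (grad3 a v), dotProduct_neg, dualCoordsL_dotProduct, dualCoordsL_dotProduct]
  ring

theorem tripleProduct_grad3_tripleProduct_grad3 (B : Fin 3 → ℝ) {a b : (Fin 3 → ℝ) → ℝ}
    {v : Fin 3 → ℝ} (ha : DifferentiableAt ℝ (fderiv ℝ a) v)
    (hb : DifferentiableAt ℝ (fderiv ℝ b) v) (c : (Fin 3 → ℝ) → ℝ) :
    B ⬝ᵥ (grad3 (fun w => B ⬝ᵥ (grad3 a w ⨯₃ grad3 b w)) v ⨯₃ grad3 c v) =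
      fderiv ℝ (fderiv ℝ a) v (grad3 c v ⨯₃ B) (grad3 b v ⨯₃ B) -
        fderiv ℝ (fderiv ℝ b) v (grad3 c v ⨯₃ B) (grad3 a v ⨯₃ B) := by
  rw [triple_product_permutation, grad3_dotProduct, fderiv_tripleProduct_grad3 B ha hb]

/-- The purely magnetic part of the bracket contributes zero to the cyclic Jacobi sum. -/
theorem magnetic_cyclic_sum_zero
    (B : Fin 3 → ℝ) (a b c : (Fin 3 → ℝ) → ℝ)
    (ha : ContDiff ℝ 2 a) (hb : ContDiff ℝ 2 b) (hc : ContDiff ℝ 2 c)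
    (v : Fin 3 → ℝ) :
    B ⬝ᵥ (grad3 (fun w => B ⬝ᵥ (grad3 a w ⨯₃ grad3 b w)) v ⨯₃ grad3 c v) +
      B ⬝ᵥ (grad3 (fun w => B ⬝ᵥ (grad3 b w ⨯₃ grad3 c w)) v ⨯₃ grad3 a v) +
      B ⬝ᵥ (grad3 (fun w => B ⬝ᵥ (grad3 c w ⨯₃ grad3 a w)) v ⨯₃ grad3 b v) = 0 := by
  have hessian_differentiable {f : (Fin 3 → ℝ) → ℝ} (hf : ContDiff ℝ 2 f) :
      DifferentiableAt ℝ (fderiv ℝ f) v :=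
    (hf.fderiv_right (m := 1) (by norm_num)).differentiable one_ne_zero v
  have hessian_symm {f : (Fin 3 → ℝ) → ℝ} (hf : ContDiff ℝ 2 f) : IsSymmSndFDerivAt ℝ f v :=
    hf.contDiffAt.isSymmSndFDerivAt (by simp)
  rw [tripleProduct_grad3_tripleProduct_grad3 B (hessian_differentiable ha)
      (hessian_differentiable hb),
    tripleProduct_grad3_tripleProduct_grad3 B (hessian_differentiable hb)
      (hessian_differentiable hc),
    tripleProduct_grad3_tripleProduct_grad3 B (hessian_differentiable hc)
      (hessian_differentiable ha),
    hessian_symm ha (grad3 c v ⨯₃ B), hessian_symm hb (grad3 a v ⨯₃ B),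
    hessian_symm hc (grad3 b v ⨯₃ B)]
  ring

end
end
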